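/- Let (Ω, F, (F_t)_{t≥0}, P) be a filtered probability space on which regular conditional probabilities P_t(ω, ·) = P(· | F_t)(ω) exist (for example Ω a standard Borel space), and let (G_t)_{t≥0} be a filtration enlargement of (F_t), i.e. G_t ⊇ F_t for all t, such that each G_t is countably generated. Assume there exists a universal supermartingale density for (G_t): an adapted (with respect to (G_t)), almost surely càdlàg process Z with P(Z_t > 0) = 1 for all t ≥ 0, such that ZM is a (G_t)-supermartingale for every nonnegative (F_t)-supermartingale M. Then the generalized Jacod criterion holds: for all t, s ≥ 0 there exists a P-null set N such that for every ω ∉ N and every B ∈ G_t, P_t(ω, B) = 0 implies P_{t+s}(ω, B) = 0; that is, P-almost surely the restriction of P_{t+s}(ω, ·) to G_t is absolutely continuous with respect to the restriction of P_t(ω, ·) to G_t. -/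

import Mathlib

open MeasureTheory Filter Set
open scoped ENNReal NNReal Topology symmDiff

/-!
Fix `t ≤ T := t + s` and write `G_t = σ(B₀, B₁, …)`. For measurable `a`, `u ↦ P_u(·, a)` is an
`(F_u)`-martingale, so the universal density gives `∫_C Z_T P_T(·, a) dP ≤ ∫_C Z_t P_t(·, a) dP`
for `C ∈ G_t`. Integrating this against the `G_t`-measurable weight `1_A / P_t(·, A)`, for a
block `A` of the partition generated by `B₀, …, B_{n-1}`, shows that the event "the block of `ω`
has `P_T(ω, ·)`-mass above `c` times its `P_t(ω, ·)`-mass" has `∫ Z_T dP ≤ E[Z_t] / c`. Since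
`Z_T > 0` a.s., its probability is small for large `c`, uniformly in `n`. By the tower property
this probability is the expected `P_T(ω, ·)`-mass of all such blocks, so by Fatou that mass has
`liminf` in `n` tending to `0` as `c → ∞`, for a.e. `ω`. Approximating `B ∈ G_t` by unions of
blocks gives `P_T(ω, B) ≤ c P_t(ω, B) + liminf_n (excess mass)`, and the criterion follows.
-/

namespace JacodCriterion

open MeasurableSpace

section ExcessMass

variable {α : Type*} {m : MeasurableSpace α}

noncomputable def excessMass (μ ν : Measure α) (c : ℝ≥0∞) (𝒜 : Finset (Set α)) : ℝ≥0∞ :=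
  ∑ A ∈ 𝒜, if c * ν A < μ A then μ A else 0

lemma measure_sUnion_le_add_excessMass (μ ν : Measure α) (c : ℝ≥0∞) {𝒜 S : Finset (Set α)}
    (h𝒜 : (𝒜 : Set (Set α)).PairwiseDisjoint id) (h𝒜m : ∀ A ∈ 𝒜, MeasurableSet A)
    (hS : S ⊆ 𝒜) :
    μ (⋃₀ S) ≤ c * ν (⋃₀ S) + excessMass μ ν c 𝒜 := by
  have hSd : (S : Set (Set α)).PairwiseDisjoint id := h𝒜.subset hS
  have hSm : ∀ A ∈ S, MeasurableSet A := fun A hA => h𝒜m A (hS hA)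
  rw [sUnion_eq_biUnion, Finset.set_biUnion_coe]
  change μ (⋃ A ∈ S, id A) ≤ c * ν (⋃ A ∈ S, id A) + _
  rw [measure_biUnion_finset hSd hSm, measure_biUnion_finset hSd hSm, Finset.mul_sum]
  calc ∑ A ∈ S, μ A
      ≤ ∑ A ∈ S, (c * ν A + if c * ν A < μ A then μ A else 0) := by
        refine Finset.sum_le_sum fun A _ => ?_
        split_ifs with h
        · exact le_add_self
        · simpa using not_lt.mp h
    _ ≤ ∑ A ∈ S, c * ν A + excessMass μ ν c 𝒜 := by
        rw [Finset.sum_add_distrib]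
        gcongr
        exact Finset.sum_le_sum_of_subset hS

lemma pairwiseDisjoint_toFinset_memPartition (t : ℕ → Set α) (n : ℕ) :
    (((finite_memPartition t n).toFinset : Finset (Set α)) : Set (Set α)).PairwiseDisjoint id := by
  rw [Finite.coe_toFinset]
  exact fun A hA B hB hAB => disjoint_memPartition t n hA hB hAB

lemma isSetRing_iUnion_measurableSet {ι : Type*} [Preorder ι] [IsDirected ι (· ≤ ·)]
    [Nonempty ι] {ms : ι → MeasurableSpace α} (hms : Monotone ms) :
    IsSetRing (⋃ i, {s | MeasurableSet[ms i] s}) where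
  empty_mem :=
    let i := Classical.arbitrary ι
    mem_iUnion.mpr ⟨i, @MeasurableSet.empty _ (ms i)⟩
  union_mem s t hs ht := by
    obtain ⟨i, hs⟩ := mem_iUnion.mp hs
    obtain ⟨j, ht⟩ := mem_iUnion.mp ht
    obtain ⟨k, hik, hjk⟩ := directed_of (· ≤ ·) i j
    exact mem_iUnion.mpr ⟨k, (hms hik _ hs).union (hms hjk _ ht)⟩
  sdiff_mem s t hs ht := by
    obtain ⟨i, hs⟩ := mem_iUnion.mp hs
    obtain ⟨j, ht⟩ := mem_iUnion.mp ht
    obtain ⟨k, hik, hjk⟩ := directed_of (· ≤ ·) i j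
    exact mem_iUnion.mpr ⟨k, (hms hik _ hs).diff (hms hjk _ ht)⟩

lemma measure_le_mul_add_liminf_excessMass_of_measurableSet_memPartition (μ ν : Measure α)
    {t : ℕ → Set α} (ht : ∀ n, MeasurableSet (t n)) {n : ℕ} {u : Set α}
    (hu : MeasurableSet[generateFrom (memPartition t n)] u) (c : ℝ≥0∞) :
    μ u ≤ c * ν u +
      liminf (fun n => excessMass μ ν c (finite_memPartition t n).toFinset) atTop := by
  rw [← tsub_le_iff_left]
  refine le_liminf_of_le (by isBoundedDefault) (eventually_atTop.mpr ⟨n, fun j hj => ?_⟩)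
  obtain ⟨S, hS, rfl⟩ := (measurableSet_generateFrom_memPartition_iff t j u).mp
    (monotone_nat_of_le_succ (generateFrom_memPartition_le_succ t) hj _ hu)
  exact tsub_le_iff_left.mpr (measure_sUnion_le_add_excessMass μ ν c
    (pairwiseDisjoint_toFinset_memPartition t j)
    (fun A hA => measurableSet_memPartition ht j ((Finite.mem_toFinset _).mp hA))
    (fun A hA => (Finite.mem_toFinset _).mpr (hS hA)))

lemma measure_le_mul_add_liminf_excessMass (μ ν : Measure α) [IsFiniteMeasure μ]
    [IsFiniteMeasure ν] {t : ℕ → Set α} (ht : ∀ n, MeasurableSet (t n)) {s : Set α}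
    (hs : MeasurableSet[generateFrom (range t)] s) {c : ℝ≥0∞} (hc : c ≠ ∞) :
    μ s ≤ c * ν s +
      liminf (fun n => excessMass μ ν c (finite_memPartition t n).toFinset) atTop := by
  lift c to ℝ≥0 using hc
  set L := liminf (fun n => excessMass μ ν c (finite_memPartition t n).toFinset) atTop
  have hgen : generateFrom (range t)
      = generateFrom (⋃ n, {u | MeasurableSet[generateFrom (memPartition t n)] u}) := calc
    _ = generateFrom (⋃ n, memPartition t n) := (generateFrom_iUnion_memPartition t).symm
    _ = ⨆ n, generateFrom (memPartition t n) := (iSup_generateFrom _).symm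
    _ = _ := (generateFrom_iUnion_measurableSet _).symm
  have hle : generateFrom (range t) ≤ m := generateFrom_le (by rintro _ ⟨i, rfl⟩; exact ht i)
  refine ENNReal.le_of_forall_pos_le_add fun ε hε _ => ?_
  -- approximate `s` in `μ + c • ν` by a set `u` measurable for one of the partitions
  obtain ⟨u, hu, hθ⟩ := exists_measure_symmDiff_lt_of_generateFrom_isSetRing
    (mα := generateFrom (range t)) (μ := (μ + c • ν).trim hle)
    (isSetRing_iUnion_measurableSet
      (monotone_nat_of_le_succ (generateFrom_memPartition_le_succ t)))
    ⟨{univ}, by simp, by simp, by simp⟩ hgen hs (ε := ε) (by simpa using hε)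
  obtain ⟨n, hun⟩ := mem_iUnion.mp hu
  have hθ' : μ (u ∆ s) + c * ν (u ∆ s) ≤ ε := by
    simpa using (le_trim hle).trans hθ.le
  calc μ s ≤ μ u + μ (u ∆ s) := by
        rw [← tsub_le_iff_left, symmDiff_comm]; exact le_measure_symmDiff
    _ ≤ c * ν u + L + μ (u ∆ s) := by
        gcongr
        exact measure_le_mul_add_liminf_excessMass_of_measurableSet_memPartition μ ν ht hun c
    _ ≤ c * (ν s + ν (u ∆ s)) + L + μ (u ∆ s) := by
        gcongr; rw [← tsub_le_iff_left]; exact le_measure_symmDiff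
    _ = c * ν s + L + (μ (u ∆ s) + c * ν (u ∆ s)) := by ring
    _ ≤ c * ν s + L + ε := by gcongr

end ExcessMass

section Lintegral

variable {α : Type*} {m : MeasurableSpace α} {μ : Measure α}

lemma exists_pos_measure_le_of_setLIntegral_le [IsFiniteMeasure μ] {f : α → ℝ≥0∞}
    (hf : Measurable f) (hpos : ∀ᵐ x ∂μ, f x ≠ 0) {ε : ℝ≥0∞} (hε : 0 < ε) :
    ∃ δ > 0, ∀ s, MeasurableSet s → ∫⁻ x in s, f x ∂μ ≤ δ → μ s ≤ ε := by
  have hsmall : Tendsto (fun n : ℕ => μ {x | f x < (n : ℝ≥0∞)⁻¹}) atTop (𝓝 0) := by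
    have hzero : ⋂ n : ℕ, {x | f x < (n : ℝ≥0∞)⁻¹} ⊆ {x | f x = 0} := fun x hx => by
      by_contra hne
      obtain ⟨n, hn⟩ := ENNReal.exists_inv_nat_lt hne
      exact (mem_iInter.mp hx n).not_ge hn.le
    have hnull : μ {x | f x = 0} = 0 := by simpa using ae_iff.mp hpos
    have := tendsto_measure_iInter_atTop (μ := μ)
      (fun n => (measurableSet_lt hf measurable_const).nullMeasurableSet)
      (fun i j hij x hx => hx.trans_le (ENNReal.inv_le_inv.mpr (Nat.cast_le.mpr hij)))
      ⟨0, measure_ne_top _ _⟩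
    rwa [measure_mono_null hzero hnull] at this
  obtain ⟨n, hn⟩ := ((hsmall.eventually (gt_mem_nhds (ENNReal.half_pos hε.ne'))).and
    (eventually_ge_atTop 1)).exists
  set η : ℝ≥0∞ := (n : ℝ≥0∞)⁻¹
  have hη0 : η ≠ 0 := ENNReal.inv_ne_zero.mpr (ENNReal.natCast_ne_top n)
  have hηtop : η ≠ ∞ :=
    ENNReal.inv_ne_top.mpr (by exact_mod_cast Nat.one_le_iff_ne_zero.mp hn.2)
  refine ⟨η * (ε / 2), ENNReal.mul_pos hη0 (ENNReal.half_pos hε.ne').ne', fun s hs hfs => ?_⟩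
  have hlarge : μ (s ∩ {x | η ≤ f x}) ≤ ε / 2 := by
    refine (ENNReal.mul_le_mul_iff_right hη0 hηtop).mp ?_
    calc η * μ (s ∩ {x | η ≤ f x}) = η * μ.restrict s {x | η ≤ f x} := by
          rw [Measure.restrict_apply (measurableSet_le measurable_const hf), inter_comm]
      _ ≤ ∫⁻ x in s, f x ∂μ := mul_meas_ge_le_lintegral₀ hf.aemeasurable η
      _ ≤ η * (ε / 2) := hfs
  calc μ s ≤ μ (s ∩ {x | η ≤ f x}) + μ {x | f x < η} := by
        refine (measure_mono fun x hx => ?_).trans (measure_union_le _ _)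
        by_cases h : η ≤ f x
        · exact Or.inl ⟨hx, h⟩
        · exact Or.inr (not_le.mp h)
    _ ≤ ε / 2 + ε / 2 := add_le_add hlarge hn.1.le
    _ = ε := ENNReal.add_halves ε

lemma ae_iInf_liminf_eq_zero {f : ℕ → ℕ → α → ℝ≥0∞} (hf : ∀ c n, Measurable (f c n))
    (hsmall : ∀ ε > 0, ∃ c, ∀ n, ∫⁻ x, f c n x ∂μ ≤ ε) :
    ∀ᵐ x ∂μ, ⨅ c, liminf (fun n => f c n x) atTop = 0 := by
  refine (lintegral_eq_zero_iff (Measurable.iInf fun c => Measurable.liminf (hf c))).mp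
    (le_antisymm (ENNReal.le_of_forall_pos_le_add fun ε hε _ => ?_) bot_le)
  obtain ⟨c, hc⟩ := hsmall ε (by exact_mod_cast hε)
  calc ∫⁻ x, ⨅ c, liminf (fun n => f c n x) atTop ∂μ
      ≤ ∫⁻ x, liminf (fun n => f c n x) atTop ∂μ := lintegral_mono fun x => iInf_le _ c
    _ ≤ liminf (fun n => ∫⁻ x, f c n x ∂μ) atTop := lintegral_liminf_le (hf c)
    _ ≤ ε := liminf_le_of_frequently_le' (Frequently.of_forall hc)
    _ = 0 + ε := (zero_add _).symm

lemma lintegral_ofReal_mul_eq_ofReal_integral {f : α → ℝ} {g : α → ℝ≥0∞} (hf : 0 ≤ᵐ[μ] f)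
    (hg : ∀ x, g x ≠ ∞) (hint : Integrable (fun x => f x * (g x).toReal) μ) :
    ∫⁻ x, ENNReal.ofReal (f x) * g x ∂μ = ENNReal.ofReal (∫ x, f x * (g x).toReal ∂μ) := by
  rw [ofReal_integral_eq_lintegral_ofReal hint
    (hf.mono fun x hx => mul_nonneg hx ENNReal.toReal_nonneg)]
  refine lintegral_congr_ae (hf.mono fun x (hx : 0 ≤ f x) => ?_)
  simp only [ENNReal.ofReal_mul hx, ENNReal.ofReal_toReal (hg x)]

end Lintegral

lemma lintegral_mul_le_of_setLIntegral_le {α : Type*} {m' m : MeasurableSpace α}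
    {μ : Measure α} (hm : m' ≤ m) {f g h : α → ℝ≥0∞} (hf : Measurable f) (hg : Measurable g)
    (hh : Measurable[m'] h)
    (hfg : ∀ s, MeasurableSet[m'] s → ∫⁻ x in s, f x ∂μ ≤ ∫⁻ x in s, g x ∂μ) :
    ∫⁻ x, h x * f x ∂μ ≤ ∫⁻ x, h x * g x ∂μ := by
  have htrim : (μ.withDensity f).trim hm ≤ (μ.withDensity g).trim hm := by
    refine Measure.le_iff.mpr fun s hs => ?_
    rw [trim_measurableSet_eq hm hs, trim_measurableSet_eq hm hs,
      withDensity_apply _ (hm s hs), withDensity_apply _ (hm s hs)]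
    exact hfg s hs
  calc ∫⁻ x, h x * f x ∂μ = ∫⁻ x, h x ∂(μ.withDensity f).trim hm := by
        rw [lintegral_trim hm hh, lintegral_withDensity_eq_lintegral_mul _ hf (hh.mono hm le_rfl)]
        simp_rw [Pi.mul_apply, mul_comm]
    _ ≤ ∫⁻ x, h x ∂(μ.withDensity g).trim hm := lintegral_mono' htrim le_rfl
    _ = ∫⁻ x, h x * g x ∂μ := by
        rw [lintegral_trim hm hh, lintegral_withDensity_eq_lintegral_mul _ hg (hh.mono hm le_rfl)]
        simp_rw [Pi.mul_apply, mul_comm]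

lemma mul_setLIntegral_inter_lt_le {α : Type*} {m' m : MeasurableSpace α} {μ : Measure α}
    (hm : m' ≤ m) {f g u v : α → ℝ≥0∞} (hf : Measurable f) (hg : Measurable g)
    (hu : Measurable u) (hv : Measurable[m'] v)
    (hle : ∀ s, MeasurableSet[m'] s → ∫⁻ x in s, f x * u x ∂μ ≤ ∫⁻ x in s, g x * v x ∂μ)
    {A : Set α} (hA : MeasurableSet[m'] A) (c : ℝ≥0∞) :
    c * ∫⁻ x in A ∩ {x | c * v x < u x}, f x ∂μ ≤ ∫⁻ x in A, g x ∂μ := by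
  have hv' : Measurable v := hv.mono hm le_rfl
  have hratio : ∀ x ∈ {x | c * v x < u x}, c ≤ (v x)⁻¹ * u x := fun x hx => by
    rcases eq_or_ne c 0 with rfl | hc
    · exact bot_le
    have hvtop : v x ≠ ∞ := fun h => by simp [h, ENNReal.mul_top hc] at hx
    rw [← ENNReal.div_eq_inv_mul, ENNReal.le_div_iff_mul_le (Or.inr (pos_of_gt hx).ne')
      (Or.inl hvtop)]
    exact hx.le
  calc c * ∫⁻ x in A ∩ {x | c * v x < u x}, f x ∂μ
      = ∫⁻ x in A ∩ {x | c * v x < u x}, c * f x ∂μ := (lintegral_const_mul c hf).symm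
    _ ≤ ∫⁻ x in A ∩ {x | c * v x < u x}, (v x)⁻¹ * u x * f x ∂μ :=
        setLIntegral_mono ((hv'.inv.mul hu).mul hf) fun x hx => by gcongr; exact hratio x hx.2
    _ ≤ ∫⁻ x in A, (v x)⁻¹ * u x * f x ∂μ := lintegral_mono_set inter_subset_left
    _ = ∫⁻ x, A.indicator (fun x => (v x)⁻¹) x * (f x * u x) ∂μ := by
        rw [← lintegral_indicator (hm A hA)]
        congr 1 with x
        by_cases hx : x ∈ A
        · simp only [hx, indicator_of_mem]; ring
        · simp [hx]
    _ ≤ ∫⁻ x, A.indicator (fun x => (v x)⁻¹) x * (g x * v x) ∂μ :=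
        lintegral_mul_le_of_setLIntegral_le hm (hf.mul hu) (hg.mul hv') (hv.inv.indicator hA) hle
    _ = ∫⁻ x in A, g x * ((v x)⁻¹ * v x) ∂μ := by
        rw [← lintegral_indicator (hm A hA)]
        congr 1 with x
        by_cases hx : x ∈ A
        · simp only [hx, indicator_of_mem]; ring
        · simp [hx]
    _ ≤ ∫⁻ x in A, g x ∂μ :=
        lintegral_mono fun x => mul_le_of_le_one_right' (ENNReal.inv_mul_le_one _)

section Kernel

variable {Ω : Type*}

lemma martingale_toReal_apply {ι : Type*} [Preorder ι] {m : MeasurableSpace Ω} {P : Measure Ω}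
    [IsFiniteMeasure P] {ℱ : Filtration ι m} {κ : ι → Ω → Measure Ω} {a : Set Ω}
    (hκmeas : ∀ i, Measurable[ℱ i] fun ω => κ i ω a)
    (hκcond : ∀ i C, MeasurableSet[ℱ i] C → P (C ∩ a) = ∫⁻ ω in C, κ i ω a ∂P) :
    Martingale (fun i ω => (κ i ω a).toReal) ℱ P := by
  have hm : ∀ i, Measurable fun ω => κ i ω a := fun i => (hκmeas i).mono (ℱ.le i) le_rfl
  have hfin : ∀ i, ∫⁻ ω, κ i ω a ∂P ≠ ∞ := fun i => by
    rw [← setLIntegral_univ, ← hκcond i univ MeasurableSet.univ]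
    exact measure_ne_top _ _
  have hint : ∀ i, Integrable (fun ω => (κ i ω a).toReal) P := fun i =>
    integrable_toReal_of_lintegral_ne_top (hm i).aemeasurable (hfin i)
  have hset : ∀ i C, MeasurableSet[ℱ i] C → ∫ ω in C, (κ i ω a).toReal ∂P = P.real (C ∩ a) :=
    fun i C hC => by
      rw [integral_toReal (hm i).aemeasurable.restrict
        (ae_restrict_of_ae (ae_lt_top (hm i) (hfin i))), ← hκcond i C hC, measureReal_def]
  refine ⟨fun i => (hκmeas i).ennreal_toReal.stronglyMeasurable, fun i j hij => ?_⟩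
  refine (ae_eq_condExp_of_forall_setIntegral_eq (ℱ.le i) (hint j)
    (fun _ _ _ => (hint i).integrableOn) (fun C hC _ => ?_)
    (hκmeas i).ennreal_toReal.stronglyMeasurable.aestronglyMeasurable).symm
  rw [hset i C hC, hset j C (ℱ.mono hij C hC)]

lemma setLIntegral_ofReal_mul_kernel_le {ι : Type*} [Preorder ι] {m : MeasurableSpace Ω}
    {P : Measure Ω} [IsFiniteMeasure P] {ℱ : Filtration ι m} {𝒢 : ι → MeasurableSpace Ω}
    {κ : ι → Ω → Measure Ω} {Z : ι → Ω → ℝ} {a : Set Ω} (hκfin : ∀ i ω, κ i ω a ≠ ∞)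
    (hκmeas : ∀ i, Measurable[ℱ i] fun ω => κ i ω a)
    (hκcond : ∀ i C, MeasurableSet[ℱ i] C → P (C ∩ a) = ∫⁻ ω in C, κ i ω a ∂P)
    (hZ : ∀ i, 0 ≤ᵐ[P] Z i)
    (hZuniv : ∀ M : ι → Ω → ℝ, Supermartingale M ℱ P → (∀ i ω, 0 ≤ M i ω) →
      (∀ i, Integrable (fun ω => Z i ω * M i ω) P) ∧
      ∀ i j, i ≤ j → ∀ C, MeasurableSet[𝒢 i] C →
        ∫ ω in C, Z j ω * M j ω ∂P ≤ ∫ ω in C, Z i ω * M i ω ∂P)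
    {i j : ι} (hij : i ≤ j) {C : Set Ω} (hC : MeasurableSet[𝒢 i] C) :
    ∫⁻ ω in C, ENNReal.ofReal (Z j ω) * κ j ω a ∂P
      ≤ ∫⁻ ω in C, ENNReal.ofReal (Z i ω) * κ i ω a ∂P := by
  obtain ⟨hint, hsuper⟩ := hZuniv _ (martingale_toReal_apply hκmeas hκcond).supermartingale
    fun _ _ => ENNReal.toReal_nonneg
  rw [lintegral_ofReal_mul_eq_ofReal_integral (ae_restrict_of_ae (hZ j)) (hκfin j)
      (hint j).restrict,
    lintegral_ofReal_mul_eq_ofReal_integral (ae_restrict_of_ae (hZ i)) (hκfin i)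
      (hint i).restrict]
  exact ENNReal.ofReal_le_ofReal (hsuper i j hij C hC)

def excessSet {m : MeasurableSpace Ω} (μ ν : Ω → Measure Ω) (c : ℝ≥0∞)
    (𝒜 : Finset (Set Ω)) : Set Ω :=
  ⋃ A ∈ 𝒜, A ∩ {ω | c * ν ω A < μ ω A}

section Measurability

variable {m : MeasurableSpace Ω} {μ ν : Ω → Measure Ω} {𝒜 : Finset (Set Ω)}

lemma measurable_excessMass (h𝒜 : ∀ A ∈ 𝒜, MeasurableSet A)
    (hμ : ∀ A, MeasurableSet A → Measurable fun ω => μ ω A)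
    (hν : ∀ A, MeasurableSet A → Measurable fun ω => ν ω A) (c : ℝ≥0∞) :
    Measurable fun ω => excessMass (μ ω) (ν ω) c 𝒜 :=
  Finset.measurable_sum _ fun A hA => Measurable.ite
    (measurableSet_lt ((hν A (h𝒜 A hA)).const_mul c) (hμ A (h𝒜 A hA)))
    (hμ A (h𝒜 A hA)) measurable_const

lemma measurableSet_excessSet (h𝒜 : ∀ A ∈ 𝒜, MeasurableSet A)
    (hμ : ∀ A, MeasurableSet A → Measurable fun ω => μ ω A)
    (hν : ∀ A, MeasurableSet A → Measurable fun ω => ν ω A) (c : ℝ≥0∞) :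
    MeasurableSet (excessSet μ ν c 𝒜) :=
  MeasurableSet.biUnion (Finset.countable_toSet _) fun A hA => (h𝒜 A hA).inter
    (measurableSet_lt ((hν A (h𝒜 A hA)).const_mul c) (hμ A (h𝒜 A hA)))

end Measurability

lemma lintegral_excessMass_eq {mF m : MeasurableSpace Ω} {P : Measure Ω} (hF : mF ≤ m)
    {μ ν : Ω → Measure Ω} {𝒜 : Finset (Set Ω)} (h𝒜 : (𝒜 : Set (Set Ω)).PairwiseDisjoint id)
    (h𝒜m : ∀ A ∈ 𝒜, MeasurableSet A) (hμ : ∀ A, MeasurableSet A → Measurable[mF] fun ω => μ ω A)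
    (hν : ∀ A, MeasurableSet A → Measurable[mF] fun ω => ν ω A)
    (hcond : ∀ A, MeasurableSet A → ∀ C, MeasurableSet[mF] C → P (C ∩ A) = ∫⁻ ω in C, μ ω A ∂P)
    (c : ℝ≥0∞) :
    ∫⁻ ω, excessMass (μ ω) (ν ω) c 𝒜 ∂P = P (excessSet μ ν c 𝒜) := by
  have hD : ∀ A ∈ 𝒜, MeasurableSet[mF] {ω | c * ν ω A < μ ω A} := fun A hA =>
    measurableSet_lt ((hν A (h𝒜m A hA)).const_mul c) (hμ A (h𝒜m A hA))
  have hDm : ∀ A ∈ 𝒜, MeasurableSet {ω | c * ν ω A < μ ω A} := fun A hA => hF _ (hD A hA)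
  rw [excessSet, measure_biUnion_finset (f := fun A => A ∩ {ω | c * ν ω A < μ ω A})
      (fun A hA B hB hAB => (h𝒜 hA hB hAB).mono inter_subset_left inter_subset_left)
      (fun A hA => (h𝒜m A hA).inter (hDm A hA))]
  unfold excessMass
  rw [lintegral_finsetSum _ fun A hA => Measurable.ite (hDm A hA)
      ((hμ A (h𝒜m A hA)).mono hF le_rfl) measurable_const]
  refine Finset.sum_congr rfl fun A hA => ?_
  rw [inter_comm, hcond A (h𝒜m A hA) _ (hD A hA), ← lintegral_indicator (hDm A hA)]
  simp only [indicator_apply, mem_ofPred_eq]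

lemma mul_setLIntegral_excessSet_le {mG m : MeasurableSpace Ω} {P : Measure Ω} (hG : mG ≤ m)
    {μ ν : Ω → Measure Ω} {𝒜 : Finset (Set Ω)} (h𝒜 : (𝒜 : Set (Set Ω)).PairwiseDisjoint id)
    (h𝒜m : ∀ A ∈ 𝒜, MeasurableSet[mG] A) {ζ ξ : Ω → ℝ≥0∞} (hζ : Measurable ζ)
    (hξ : Measurable ξ) (hμ : ∀ A, MeasurableSet A → Measurable fun ω => μ ω A)
    (hν : ∀ A, MeasurableSet A → Measurable[mG] fun ω => ν ω A)
    (hdens : ∀ A, MeasurableSet A → ∀ C, MeasurableSet[mG] C →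
      ∫⁻ ω in C, ζ ω * μ ω A ∂P ≤ ∫⁻ ω in C, ξ ω * ν ω A ∂P) (c : ℝ≥0∞) :
    c * ∫⁻ ω in excessSet μ ν c 𝒜, ζ ω ∂P ≤ ∫⁻ ω, ξ ω ∂P := by
  have h𝒜m' : ∀ A ∈ 𝒜, MeasurableSet A := fun A hA => hG _ (h𝒜m A hA)
  rw [excessSet, lintegral_biUnion_finset (t := fun A => A ∩ {ω | c * ν ω A < μ ω A})
      (fun A hA B hB hAB => (h𝒜 hA hB hAB).mono inter_subset_left inter_subset_left)
      (fun A hA => (h𝒜m' A hA).inter (measurableSet_lt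
        (((hν A (h𝒜m' A hA)).mono hG le_rfl).const_mul c) (hμ A (h𝒜m' A hA)))),
    Finset.mul_sum]
  calc ∑ A ∈ 𝒜, c * ∫⁻ ω in A ∩ {ω | c * ν ω A < μ ω A}, ζ ω ∂P
      ≤ ∑ A ∈ 𝒜, ∫⁻ ω in A, ξ ω ∂P := Finset.sum_le_sum fun A hA =>
        mul_setLIntegral_inter_lt_le hG hζ hξ (hμ A (h𝒜m' A hA)) (hν A (h𝒜m' A hA))
          (hdens A (h𝒜m' A hA)) (h𝒜m A hA) c
    _ = ∫⁻ ω in ⋃ A ∈ 𝒜, A, ξ ω ∂P := (lintegral_biUnion_finset h𝒜 h𝒜m' ξ).symm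
    _ ≤ ∫⁻ ω, ξ ω ∂P := setLIntegral_le_lintegral _ _

lemma ae_iInf_liminf_excessMass_eq_zero {mG mF m : MeasurableSpace Ω} {P : Measure Ω}
    [IsFiniteMeasure P] (hG : mG ≤ m) (hF : mF ≤ m) {t : ℕ → Set Ω}
    (ht : ∀ n, MeasurableSet[mG] (t n)) {μ ν : Ω → Measure Ω}
    (hμ : ∀ A, MeasurableSet A → Measurable[mF] fun ω => μ ω A)
    (hνF : ∀ A, MeasurableSet A → Measurable[mF] fun ω => ν ω A)
    (hνG : ∀ A, MeasurableSet A → Measurable[mG] fun ω => ν ω A)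
    (hcond : ∀ A, MeasurableSet A → ∀ C, MeasurableSet[mF] C → P (C ∩ A) = ∫⁻ ω in C, μ ω A ∂P)
    {ζ ξ : Ω → ℝ≥0∞} (hζ : Measurable ζ) (hζpos : ∀ᵐ ω ∂P, ζ ω ≠ 0) (hξ : Measurable ξ)
    (hξfin : ∫⁻ ω, ξ ω ∂P ≠ ∞)
    (hdens : ∀ A, MeasurableSet A → ∀ C, MeasurableSet[mG] C →
      ∫⁻ ω in C, ζ ω * μ ω A ∂P ≤ ∫⁻ ω in C, ξ ω * ν ω A ∂P) :
    ∀ᵐ ω ∂P, ⨅ c : ℕ, liminf (fun n =>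
      excessMass (μ ω) (ν ω) c (finite_memPartition t n).toFinset) atTop = 0 := by
  have h𝒜G : ∀ n, ∀ A ∈ (finite_memPartition t n).toFinset, MeasurableSet[mG] A :=
    fun n A hA => @measurableSet_memPartition _ mG _ ht n _ ((Finite.mem_toFinset _).mp hA)
  have h𝒜 : ∀ n, ∀ A ∈ (finite_memPartition t n).toFinset, MeasurableSet A :=
    fun n A hA => hG _ (h𝒜G n A hA)
  have hμm : ∀ A, MeasurableSet A → Measurable fun ω => μ ω A := fun A hA =>
    (hμ A hA).mono hF le_rfl
  have hνm : ∀ A, MeasurableSet A → Measurable fun ω => ν ω A := fun A hA =>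
    (hνG A hA).mono hG le_rfl
  refine ae_iInf_liminf_eq_zero (fun c n => measurable_excessMass (h𝒜 n) hμm hνm c)
    fun ε hε => ?_
  obtain ⟨δ, hδ, hsmall⟩ := exists_pos_measure_le_of_setLIntegral_le hζ hζpos hε
  obtain ⟨c, hc⟩ := ENNReal.exists_nat_gt (ENNReal.div_lt_top hξfin hδ.ne').ne
  have hcδ : ∫⁻ ω, ξ ω ∂P < c * δ := (ENNReal.div_lt_iff (Or.inl hδ.ne') (Or.inr hξfin)).mp hc
  refine ⟨c, fun n => ?_⟩
  rw [lintegral_excessMass_eq hF (pairwiseDisjoint_toFinset_memPartition t n) (h𝒜 n) hμ hνF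
    hcond c]
  refine hsmall _ (measurableSet_excessSet (h𝒜 n) hμm hνm c) ?_
  by_contra! hlt
  have hle := mul_setLIntegral_excessSet_le hG (pairwiseDisjoint_toFinset_memPartition t n)
    (h𝒜G n) hζ hξ hμm hνG hdens c
  exact (hcδ.trans_le ((mul_le_mul_right hlt.le _).trans hle)).false

end Kernel

end JacodCriterion

open JacodCriterion in
theorem statement18_general {Ω : Type*} {m : MeasurableSpace Ω} (P : Measure Ω) [IsProbabilityMeasure P]
    (ℱ : Filtration ℝ≥0 m)
    (𝒢 : ℝ≥0 → MeasurableSpace Ω)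
    (h𝒢F : ∀ t, ℱ t ≤ 𝒢 t) (h𝒢m : ∀ t, 𝒢 t ≤ m)
    (h𝒢count : ∀ t : ℝ≥0, ∃ B : ℕ → Set Ω, 𝒢 t = MeasurableSpace.generateFrom (Set.range B))
    (κ : ℝ≥0 → Ω → Measure Ω)
    (hκprob : ∀ t ω, IsProbabilityMeasure (κ t ω))
    (hκmeas : ∀ t : ℝ≥0, ∀ A : Set Ω, MeasurableSet A → Measurable[ℱ t] fun ω => κ t ω A)
    (hκcond : ∀ t : ℝ≥0, ∀ A : Set Ω, MeasurableSet A → ∀ C : Set Ω, MeasurableSet[ℱ t] C →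
      P (C ∩ A) = ∫⁻ ω in C, κ t ω A ∂P)
    (Z : ℝ≥0 → Ω → ℝ)
    (hZadapted : ∀ t, Measurable[𝒢 t] (Z t))
    (hZpos : ∀ t, P {ω | 0 < Z t ω} = 1)
    (hZuniv : ∀ M : ℝ≥0 → Ω → ℝ, Supermartingale M ℱ P → (∀ t ω, 0 ≤ M t ω) →
      (∀ t, Integrable (fun ω => Z t ω * M t ω) P) ∧
      ∀ s t : ℝ≥0, s ≤ t → ∀ A : Set Ω, MeasurableSet[𝒢 s] A →
        ∫ ω in A, Z t ω * M t ω ∂P ≤ ∫ ω in A, Z s ω * M s ω ∂P) :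
    ∀ t s : ℝ≥0, ∃ N : Set Ω, MeasurableSet N ∧ P N = 0 ∧
      ∀ ω ∉ N, ∀ B : Set Ω, MeasurableSet[𝒢 t] B → κ t ω B = 0 → κ (t + s) ω B = 0 := by
  intro t s
  obtain ⟨Bs, hG⟩ := h𝒢count t
  have hBs : ∀ i, MeasurableSet[𝒢 t] (Bs i) := fun i =>
    hG ▸ MeasurableSpace.measurableSet_generateFrom (mem_range_self i)
  have hZm : ∀ u, Measurable (Z u) := fun u => (hZadapted u).mono (h𝒢m u) le_rfl
  have hZpos' : ∀ u, ∀ᵐ ω ∂P, 0 < Z u ω := fun u =>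
    (ae_iff_measure_eq (measurableSet_lt measurable_const (hZm u)).nullMeasurableSet).mpr
      (by rw [hZpos, measure_univ])
  have hZint : ∀ u, Integrable (Z u) P := fun u => by
    simpa using (hZuniv _ (martingale_const ℱ P 1).supermartingale fun _ _ => zero_le_one).1 u
  have hdens : ∀ A, MeasurableSet A → ∀ C, MeasurableSet[𝒢 t] C →
      ∫⁻ ω in C, ENNReal.ofReal (Z (t + s) ω) * κ (t + s) ω A ∂P
        ≤ ∫⁻ ω in C, ENNReal.ofReal (Z t ω) * κ t ω A ∂P := fun A hA C hC =>
    setLIntegral_ofReal_mul_kernel_le (fun u ω => have := hκprob u ω; measure_ne_top _ A)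
      (hκmeas · A hA) (hκcond · A hA) (fun u => (hZpos' u).mono fun _ h => h.le) hZuniv
      le_self_add hC
  have hexcess := ae_iInf_liminf_excessMass_eq_zero (h𝒢m t) (ℱ.le (t + s)) hBs
    (hκmeas (t + s)) (fun A hA => (hκmeas t A hA).mono (ℱ.mono le_self_add) le_rfl)
    (fun A hA => (hκmeas t A hA).mono (h𝒢F t) le_rfl) (hκcond (t + s))
    (ENNReal.measurable_ofReal.comp (hZm _))
    ((hZpos' _).mono fun _ h => (ENNReal.ofReal_pos.mpr h).ne')
    (ENNReal.measurable_ofReal.comp (hZm t)) (hZint t).lintegral_lt_top.ne hdens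
  obtain ⟨N, hNsub, hNm, hN0⟩ := exists_measurable_superset_of_null (ae_iff.mp hexcess)
  refine ⟨N, hNm, hN0, fun ω hω B hB hB0 => le_antisymm ?_ bot_le⟩
  rw [← not_not.mp fun h => hω (hNsub h)]
  refine le_iInf fun c => ?_
  have := hκprob t ω
  have := hκprob (t + s) ω
  have h := measure_le_mul_add_liminf_excessMass (κ (t + s) ω) (κ t ω)
    (fun i => h𝒢m t _ (hBs i)) (hG ▸ hB) (ENNReal.natCast_ne_top c)
  rwa [hB0, mul_zero, zero_add] at h

/-- (A universal supermartingale density implies the generalized Jacod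
criterion.) Let `(G_t)` be a filtration enlargement of `(F_t)` with each `G_t` countably
generated, and let `P_t(ω, ·)` be regular conditional probabilities given `F_t`. If there
exists a universal supermartingale density `Z` for `(G_t)`, then for all `t, s ≥ 0` there is
a `P`-null set `N` such that for every `ω ∉ N` and every `B ∈ G_t`, `P_t(ω, B) = 0` implies
`P_{t+s}(ω, B) = 0`; i.e. a.s. `P_{t+s}(ω, ·)|_{G_t} ≪ P_t(ω, ·)|_{G_t}`. -/
theorem statement18 {Ω : Type*} {m : MeasurableSpace Ω} (P : Measure Ω) [IsProbabilityMeasure P]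
    (ℱ : Filtration ℝ≥0 m)
    (𝒢 : ℝ≥0 → MeasurableSpace Ω)
    (h𝒢F : ∀ t, ℱ t ≤ 𝒢 t) (h𝒢m : ∀ t, 𝒢 t ≤ m)
    (h𝒢count : ∀ t : ℝ≥0, ∃ B : ℕ → Set Ω, 𝒢 t = MeasurableSpace.generateFrom (Set.range B))
    (κ : ℝ≥0 → Ω → Measure Ω)
    (hκprob : ∀ t ω, IsProbabilityMeasure (κ t ω))
    (hκmeas : ∀ t : ℝ≥0, ∀ A : Set Ω, MeasurableSet A → Measurable[ℱ t] fun ω => κ t ω A)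
    (hκcond : ∀ t : ℝ≥0, ∀ A : Set Ω, MeasurableSet A → ∀ C : Set Ω, MeasurableSet[ℱ t] C →
      P (C ∩ A) = ∫⁻ ω in C, κ t ω A ∂P)
    (Z : ℝ≥0 → Ω → ℝ)
    (hZadapted : ∀ t, Measurable[𝒢 t] (Z t))
    (hZcadlag : ∀ᵐ ω ∂P, (∀ t, ContinuousWithinAt (fun s => Z s ω) (Ici t) t) ∧
      ∀ t : ℝ≥0, 0 < t → ∃ c : ℝ, Tendsto (fun s => Z s ω) (𝓝[<] t) (𝓝 c))
    (hZpos : ∀ t, P {ω | 0 < Z t ω} = 1)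
    (hZuniv : ∀ M : ℝ≥0 → Ω → ℝ, Supermartingale M ℱ P → (∀ t ω, 0 ≤ M t ω) →
      (∀ t, Integrable (fun ω => Z t ω * M t ω) P) ∧
      ∀ s t : ℝ≥0, s ≤ t → ∀ A : Set Ω, MeasurableSet[𝒢 s] A →
        ∫ ω in A, Z t ω * M t ω ∂P ≤ ∫ ω in A, Z s ω * M s ω ∂P) :
    ∀ t s : ℝ≥0, ∃ N : Set Ω, MeasurableSet N ∧ P N = 0 ∧
      ∀ ω ∉ N, ∀ B : Set Ω, MeasurableSet[𝒢 t] B → κ t ω B = 0 → κ (t + s) ω B = 0 :=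
  statement18_general P ℱ 𝒢 h𝒢F h𝒢m h𝒢count κ hκprob hκmeas hκcond Z hZadapted hZpos hZuniv
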